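/- arXiv:2508.12256 — 4 statements merged into one kernel-verified Lean document; each statement's English description precedes it below -/
import Mathlib

section
/- Let Λ = diag(λ_1,...,λ_d) with all λ_i ≥ 0 and let D = Σ_{i,j} E_{ij} ⊗ D_{ij} be positive semi-definite with D_{ii} = 0 whenever λ_i = 0. Then Z solves (Λ ⊗ 1)Z + Z(Λ ⊗ 1) = D if and only if Z = Σ_{λ_i+λ_j≠0} E_{ij} ⊗ D_{ij}/(λ_i+λ_j) + Σ_{λ_i+λ_j=0} E_{ij} ⊗ W_{ij} for some matrices W_{ij}. -/
open Matrix Kronecker ComplexOrder BigOperators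

/-!
Since `Λ ⊗ 1` is the diagonal matrix with entry `λ_i` at `(i, a)`, the equation reads entrywise
`(λ_i + λ_j) Z_{(i,a),(j,b)} = (D_{ij})_{ab}`. Where `λ_i + λ_j ≠ 0` this determines the block
`Z_{ij}`. Where `λ_i + λ_j = 0`, nonnegativity gives `λ_i = 0`, hence `D_{ii} = 0`, and a positive
semidefinite matrix with a zero diagonal entry has a zero row, so `D_{ij} = 0` and the block
`Z_{ij}` is arbitrary.
-/

namespace Matrix

theorem PosSemidef.apply_eq_zero_of_apply_self_eq_zero {m 𝕜 : Type*} [Fintype m]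
    [DecidableEq m] [RCLike 𝕜] {M : Matrix m m 𝕜} (hM : M.PosSemidef) {k : m}
    (hk : M k k = 0) (l : m) : M k l = 0 := by
  have hcol : M *ᵥ Pi.single k 1 = 0 := by
    rw [← hM.dotProduct_mulVec_zero_iff]
    simpa [mulVec_single_one] using hk
  have hlk : M l k = 0 := by simpa [mulVec_single_one] using congrFun hcol l
  rw [← hM.isHermitian.apply k l, hlk, star_zero]

section BlockSum

variable {ι ι' κ κ' R : Type*} [Fintype ι] [Fintype ι'] [DecidableEq ι] [DecidableEq ι']
  [Semiring R]

theorem sum_single_kronecker_apply (C : ι → ι' → Matrix κ κ' R) (i : ι) (j : ι') (a : κ)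
    (b : κ') : (∑ k, ∑ l, single k l (1 : R) ⊗ₖ C k l) (i, a) (j, b) = C i j a b := by
  simp [sum_apply, single_apply, ite_and]

theorem exists_eq_sum_single_kronecker_ite_iff (c : ι → ι' → Prop) [∀ i j, Decidable (c i j)]
    (A : ι → ι' → Matrix κ κ' R) (Z : Matrix (ι × κ) (ι' × κ') R) :
    (∃ W : ι → ι' → Matrix κ κ' R, Z = ∑ i, ∑ j,
        if c i j then single i j (1 : R) ⊗ₖ A i j else single i j (1 : R) ⊗ₖ W i j) ↔
      ∀ i a j b, c i j → Z (i, a) (j, b) = A i j a b := by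
  have hite (W : ι → ι' → Matrix κ κ' R) : (∑ i, ∑ j,
      if c i j then single i j (1 : R) ⊗ₖ A i j else single i j (1 : R) ⊗ₖ W i j) =
      ∑ i, ∑ j, single i j (1 : R) ⊗ₖ if c i j then A i j else W i j := by
    simp only [apply_ite]
  simp only [hite]
  constructor
  · rintro ⟨W, rfl⟩ i a j b h
    simp [sum_single_kronecker_apply, h]
  · intro h
    refine ⟨fun i j => of fun a b => Z (i, a) (j, b), ?_⟩
    ext ⟨i, a⟩ ⟨j, b⟩
    rw [sum_single_kronecker_apply]
    split_ifs with hc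
    · exact h i a j b hc
    · rfl

end BlockSum

theorem PosSemidef.block_eq_zero_of_diagonal_block_eq_zero {ι κ 𝕜 : Type*} [Fintype ι]
    [Fintype κ] [DecidableEq ι] [DecidableEq κ] [RCLike 𝕜] {C : ι → ι → Matrix κ κ 𝕜}
    (hC : (∑ i, ∑ j, single i j (1 : 𝕜) ⊗ₖ C i j).PosSemidef) {i : ι} (hi : C i i = 0)
    (j : ι) : C i j = 0 := by
  ext a b
  have hdiag := sum_single_kronecker_apply C i i a a
  rw [hi, zero_apply] at hdiag
  simpa [sum_single_kronecker_apply] using hC.apply_eq_zero_of_apply_self_eq_zero hdiag (j, b)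

theorem diagonal_mul_add_mul_diagonal_eq_iff {m K : Type*} [Fintype m] [DecidableEq m] [Field K]
    (v : m → K) (Z D : Matrix m m K) (hD : ∀ p q, v p + v q = 0 → D p q = 0) :
    diagonal v * Z + Z * diagonal v = D ↔
      ∀ p q, v p + v q ≠ 0 → Z p q = (v p + v q)⁻¹ * D p q := by
  have hentry p q : (diagonal v * Z + Z * diagonal v) p q = (v p + v q) * Z p q := by
    simp only [add_apply, diagonal_mul, mul_diagonal]
    ring
  rw [← Matrix.ext_iff]
  refine forall₂_congr fun p q => ?_
  rw [hentry]
  by_cases hpq : v p + v q = 0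
  · simp [hpq, hD p q hpq]
  · simp only [ne_eq, hpq, not_false_eq_true, forall_const]
    rw [eq_inv_mul_iff_mul_eq₀ hpq]

end Matrix

/-- Let `Λ = diag(λ)` with all `λ i ≥ 0`, and let `D = Σ E_{ij} ⊗ D_{ij}` be positive
semi-definite with `D_{ii} = 0` whenever `λ i = 0`. Then `Z` solves the Sylvester equation
`(Λ ⊗ 1)Z + Z(Λ ⊗ 1) = D` iff
`Z = Σ_{λ_i+λ_j ≠ 0} E_{ij} ⊗ D_{ij}/(λ_i+λ_j) + Σ_{λ_i+λ_j = 0} E_{ij} ⊗ W_{ij}`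
for some family of matrices `W`. -/
theorem stmt_8 {d n : ℕ} (lam : Fin d → ℝ) (hlam : ∀ i, 0 ≤ lam i)
    (Dblk : Fin d → Fin d → Matrix (Fin n) (Fin n) ℂ)
    (hD : (∑ i : Fin d, ∑ j : Fin d, Matrix.single i j (1 : ℂ) ⊗ₖ Dblk i j).PosSemidef)
    (hzero : ∀ i, lam i = 0 → Dblk i i = 0)
    (Z : Matrix (Fin d × Fin n) (Fin d × Fin n) ℂ) :
    ((Matrix.diagonal (fun i => (lam i : ℂ)) ⊗ₖ (1 : Matrix (Fin n) (Fin n) ℂ)) * Z +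
        Z * (Matrix.diagonal (fun i => (lam i : ℂ)) ⊗ₖ (1 : Matrix (Fin n) (Fin n) ℂ)) =
      ∑ i : Fin d, ∑ j : Fin d, Matrix.single i j (1 : ℂ) ⊗ₖ Dblk i j) ↔
    ∃ W : Fin d → Fin d → Matrix (Fin n) (Fin n) ℂ,
      Z = (∑ i : Fin d, ∑ j : Fin d,
            if lam i + lam j ≠ 0 then
              Matrix.single i j (1 : ℂ) ⊗ₖ (((lam i + lam j : ℂ)⁻¹) • Dblk i j)
            else Matrix.single i j (1 : ℂ) ⊗ₖ W i j) := by
  have hΛ : diagonal (fun i => (lam i : ℂ)) ⊗ₖ (1 : Matrix (Fin n) (Fin n) ℂ) =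
      diagonal fun p => (lam p.1 : ℂ) := by
    rw [← diagonal_one, diagonal_kronecker_diagonal]
    simp
  have hblock (i j : Fin d) (hij : (lam i : ℂ) + lam j = 0) : Dblk i j = 0 := by
    have hi : lam i = 0 := by
      have : lam i + lam j = 0 := by exact_mod_cast hij
      linarith [hlam i, hlam j]
    exact hD.block_eq_zero_of_diagonal_block_eq_zero (hzero i hi) j
  rw [hΛ, diagonal_mul_add_mul_diagonal_eq_iff, exists_eq_sum_single_kronecker_ite_iff]
  · simp only [Prod.forall, sum_single_kronecker_apply, Matrix.smul_apply, smul_eq_mul]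
    norm_cast
  · rintro ⟨i, a⟩ ⟨j, b⟩ hij
    rw [sum_single_kronecker_apply, hblock i j hij, Matrix.zero_apply]
end

section
/- Let Λ = diag(λ_1,...,λ_d) with all λ_i ≥ 0 and let D = Σ_{i,j} E_{ij} ⊗ D_{ij} be positive semi-definite with D_{ii} = 0 whenever λ_i = 0. Then the matrix Σ_{{i,j : λ_i+λ_j ≠ 0}} E_{ij} ⊗ D_{ij}/(λ_i+λ_j) is positive semi-definite. -/
/-!
Replacing each `λ_i = 0` by `1` changes nothing: a positive semidefinite matrix with a
vanishing diagonal entry has the whole row and column through it vanishing, so all blocks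
`D_{ij}` with `λ_i = 0` or `λ_j = 0` are zero. With all `λ_i > 0` the matrix in question is the
Hadamard product of `D` with the Cauchy matrix `((λ_i + λ_j)⁻¹)`, which is positive semidefinite
as the Gram matrix of the functions `t ↦ exp (-λ_i t)` in `L²(0, ∞)`; the Schur product theorem
concludes.
-/

open Matrix Kronecker ComplexOrder MeasureTheory Set

lemma integral_exp_neg_mul_Ioi_zero {b : ℝ} (hb : 0 < b) :
    ∫ t in Ioi (0 : ℝ), Real.exp (-b * t) = b⁻¹ := by
  rw [integral_exp_mul_Ioi (neg_neg_of_pos hb)]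
  simp

lemma memLp_two_exp_neg_mul_Ioi_zero (𝕜 : Type*) [RCLike 𝕜] {b : ℝ} (hb : 0 < b) :
    MemLp (fun t : ℝ => (Real.exp (-b * t) : 𝕜)) 2 (volume.restrict (Ioi 0)) := by
  refine (memLp_two_iff_integrable_sq_norm (by fun_prop)).2 ?_
  have h : ∀ t : ℝ, ‖(Real.exp (-b * t) : 𝕜)‖ ^ 2 = Real.exp (-(2 * b) * t) := by
    intro t
    rw [RCLike.norm_ofReal, abs_of_pos (Real.exp_pos _), ← Real.exp_nat_mul]
    ring_nf
  simp_rw [h]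
  exact integrableOn_exp_mul_Ioi (by linarith) 0

theorem posSemidef_inv_add {ι 𝕜 : Type*} [Fintype ι] [RCLike 𝕜] (μ : ι → ℝ)
    (hμ : ∀ i, 0 < μ i) : (of fun i j => (((μ i + μ j)⁻¹ : ℝ) : 𝕜)).PosSemidef := by
  let e : ι → Lp 𝕜 2 (volume.restrict (Ioi (0 : ℝ))) := fun i =>
    (memLp_two_exp_neg_mul_Ioi_zero 𝕜 (hμ i)).toLp _
  convert posSemidef_gram 𝕜 e using 1
  ext i j
  rw [gram_apply, L2.inner_def]
  have hij : ∀ᵐ t ∂(volume.restrict (Ioi (0 : ℝ))), inner 𝕜 (e i t) (e j t) =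
      ((Real.exp (-(μ i + μ j) * t) : ℝ) : 𝕜) := by
    filter_upwards [(memLp_two_exp_neg_mul_Ioi_zero 𝕜 (hμ i)).coeFn_toLp,
      (memLp_two_exp_neg_mul_Ioi_zero 𝕜 (hμ j)).coeFn_toLp] with t hi hj
    rw [hi, hj, RCLike.inner_apply, RCLike.conj_ofReal, ← RCLike.ofReal_mul, ← Real.exp_add]
    ring_nf
  rw [integral_congr_ae hij, integral_ofReal,
    integral_exp_neg_mul_Ioi_zero (add_pos (hμ i) (hμ j)), of_apply]

theorem Matrix.sum_single_kronecker {ι κ m n R : Type*} [Fintype ι] [Fintype κ] [DecidableEq ι]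
    [DecidableEq κ] [Semiring R] (B : ι → κ → Matrix m n R) :
    ∑ i, ∑ j, single i j (1 : R) ⊗ₖ B i j = of fun p q => B p.1 q.1 p.2 q.2 := by
  ext p q
  simp [Matrix.sum_apply, single_apply, ite_and]

namespace Matrix.PosSemidef

variable {n 𝕜 : Type*} [Fintype n] [DecidableEq n] [RCLike 𝕜] {A : Matrix n n 𝕜}

theorem apply_eq_zero_of_diag_eq_zero_right (hA : A.PosSemidef) {i : n} (hi : A i i = 0)
    (j : n) : A j i = 0 := by
  have hcol : A *ᵥ Pi.single i 1 = 0 :=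
    (hA.dotProduct_mulVec_zero_iff _).1 (by simp [hi])
  simpa using congrFun hcol j

theorem apply_eq_zero_of_diag_eq_zero_left (hA : A.PosSemidef) {i : n} (hi : A i i = 0)
    (j : n) : A i j = 0 := by
  rw [← hA.1.apply i j, hA.apply_eq_zero_of_diag_eq_zero_right hi j, star_zero]

end Matrix.PosSemidef

/-- Let `Λ = diag(λ)` with all `λ i ≥ 0`, and let `D = Σ E_{ij} ⊗ D_{ij}` be positive
semi-definite with `D_{ii} = 0` whenever `λ i = 0`. Then the block matrix
`Σ_{λ_i+λ_j ≠ 0} E_{ij} ⊗ D_{ij}/(λ_i+λ_j)` is positive semi-definite. -/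
theorem stmt_9 {d n : ℕ} (lam : Fin d → ℝ) (hlam : ∀ i, 0 ≤ lam i)
    (Dblk : Fin d → Fin d → Matrix (Fin n) (Fin n) ℂ)
    (hD : (∑ i : Fin d, ∑ j : Fin d, single i j (1 : ℂ) ⊗ₖ Dblk i j).PosSemidef)
    (hzero : ∀ i, lam i = 0 → Dblk i i = 0) :
    (∑ i : Fin d, ∑ j : Fin d,
      if lam i + lam j ≠ 0 then
        single i j (1 : ℂ) ⊗ₖ (((lam i + lam j : ℂ)⁻¹) • Dblk i j)
      else 0).PosSemidef := by
  rw [sum_single_kronecker] at hD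
  have hrow (i j : Fin d) (hi : lam i = 0) : Dblk i j = 0 := by
    ext a b
    exact hD.apply_eq_zero_of_diag_eq_zero_left (i := (i, a)) (by simp [hzero i hi]) (j, b)
  have hcol (i j : Fin d) (hj : lam j = 0) : Dblk i j = 0 := by
    ext a b
    exact hD.apply_eq_zero_of_diag_eq_zero_right (i := (j, b)) (by simp [hzero j hj]) (i, a)
  let μ : Fin d → ℝ := fun i => if lam i = 0 then 1 else lam i
  have hμ (i : Fin d) : 0 < μ i := by
    by_cases hi : lam i = 0
    · simp [μ, hi]
    · simpa [μ, hi] using (hlam i).lt_of_ne' hi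
  have hblock (i j : Fin d) :
      (if lam i + lam j ≠ 0 then single i j (1 : ℂ) ⊗ₖ (((lam i + lam j : ℂ)⁻¹) • Dblk i j)
        else 0) = single i j (1 : ℂ) ⊗ₖ ((((μ i + μ j : ℝ) : ℂ)⁻¹) • Dblk i j) := by
    by_cases hi : lam i = 0
    · simp [hrow i j hi]
    by_cases hj : lam j = 0
    · simp [hcol i j hj]
    have hij : lam i + lam j ≠ 0 := by linarith [(hlam i).lt_of_ne' hi, (hlam j).lt_of_ne' hj]
    simp [μ, hi, hj, hij]
  have hC := posSemidef_inv_add (𝕜 := ℂ) (ι := Fin d × Fin n) (μ ∘ Prod.fst) fun p => hμ p.1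
  simp_rw [hblock, sum_single_kronecker]
  refine (congrArg PosSemidef ?_).mp (hC.hadamard hD)
  ext p q
  simp
end

section
/- If D is positive semi-definite and λ_i ≥ 0 with Σ_{j : λ_i+λ_j ≠ 0} terms as above, then for any vector v = Σ_k e_k ⊗ v_k, one has v† (Σ_{λ_i+λ_j≠0} E_{ij} ⊗ D_{ij}/(λ_i+λ_j)) v = ∫_0^∞ v(t)† D v(t) dt ≥ 0, where v(t) = Σ_k e^{-tλ_k} e_k ⊗ v_k. -/
open Matrix Kronecker ComplexOrder BigOperators MeasureTheory

/-!
Write `q i j = v_i† D_ij v_j`. Expanding blockwise, `v† X v = Σ q i j / (λ_i + λ_j)` and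
`v(t)† D v(t) = Σ e^{-t(λ_i+λ_j)} q i j`, so the identity is the termwise integral
`∫_0^∞ e^{-ts} dt = 1/s`; the terms with `λ_i + λ_j = 0` vanish on both sides since `D_ij = 0`.
Nonnegativity is then that of the integrand `v(t)† D v(t)`.
-/

namespace Matrix

variable {ι ι' κ κ' R : Type*}

theorem sum_single_kronecker_eq_comp [Fintype ι] [Fintype ι'] [DecidableEq ι] [DecidableEq ι']
    [Semiring R] (B : ι → ι' → Matrix κ κ' R) :
    ∑ i, ∑ j, single i j (1 : R) ⊗ₖ B i j = comp ι ι' κ κ' R (of B) := by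
  ext ⟨i, a⟩ ⟨j, b⟩
  simp [sum_apply, kroneckerMap_apply, single_apply, ite_and]

theorem dotProduct_comp_mulVec [Fintype ι] [Fintype ι'] [Fintype κ] [Fintype κ']
    [NonUnitalSemiring R] (B : Matrix ι ι' (Matrix κ κ' R)) (u : ι × κ → R)
    (w : ι' × κ' → R) :
    u ⬝ᵥ (comp ι ι' κ κ' R B *ᵥ w) =
      ∑ i, ∑ j, Function.curry u i ⬝ᵥ (B i j *ᵥ Function.curry w j) := by
  simp only [dotProduct, mulVec, Fintype.sum_prod_type, comp_apply, Finset.mul_sum,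
    Function.curry_apply]
  rw [Finset.sum_congr rfl fun i _ => Finset.sum_comm]

theorem star_dotProduct_comp_mulVec_real_mul {𝕜 : Type*} [RCLike 𝕜] [Fintype ι] [Fintype κ]
    (B : Matrix ι ι (Matrix κ κ 𝕜)) (r : ι → ℝ) (v : ι × κ → 𝕜) :
    let w : ι × κ → 𝕜 := fun p => (r p.1 : 𝕜) * v p
    star w ⬝ᵥ (comp ι ι κ κ 𝕜 B *ᵥ w) =
      ∑ i, ∑ j, ((r i * r j : ℝ) : 𝕜) *
        (star (Function.curry v i) ⬝ᵥ (B i j *ᵥ Function.curry v j)) := by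
  intro w
  have hw : ∀ i, Function.curry w i = (r i : 𝕜) • Function.curry v i := fun i => rfl
  rw [dotProduct_comp_mulVec]
  refine Finset.sum_congr rfl fun i _ => Finset.sum_congr rfl fun j _ => ?_
  change star (Function.curry w i) ⬝ᵥ _ = _
  rw [hw, hw, star_smul, RCLike.star_def, RCLike.conj_ofReal, smul_dotProduct, mulVec_smul,
    dotProduct_smul, smul_eq_mul, smul_eq_mul, RCLike.ofReal_mul, mul_assoc]

end Matrix

theorem integral_Ioi_ofReal_exp_neg_mul {s : ℝ} (hs : 0 < s) :
    ∫ t in Set.Ioi (0 : ℝ), (Real.exp (-(s * t)) : ℂ) = (s : ℂ)⁻¹ := by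
  have := integral_exp_mul_complex_Ioi (a := -s) (by simpa using hs) 0
  push_cast
  simpa [neg_mul] using this

theorem integrableOn_Ioi_ofReal_exp_neg_mul {s : ℝ} (hs : 0 < s) :
    IntegrableOn (fun t : ℝ => (Real.exp (-(s * t)) : ℂ)) (Set.Ioi 0) := by
  have := integrableOn_exp_mul_complex_Ioi (a := -s) (by simpa using hs) 0
  push_cast
  simpa [neg_mul] using this

theorem integral_Ioi_sum_ofReal_exp_neg_mul_mul {ι : Type*} [Fintype ι] (s : ι → ℝ) (c : ι → ℂ)
    (hs : ∀ k, 0 ≤ s k) (hc : ∀ k, s k = 0 → c k = 0) :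
    ∫ t in Set.Ioi (0 : ℝ), ∑ k, (Real.exp (-(s k * t)) : ℂ) * c k = ∑ k, (s k : ℂ)⁻¹ * c k := by
  have hterm : ∀ k, IntegrableOn (fun t : ℝ => (Real.exp (-(s k * t)) : ℂ) * c k) (Set.Ioi 0) ∧
      ∫ t in Set.Ioi (0 : ℝ), (Real.exp (-(s k * t)) : ℂ) * c k = (s k : ℂ)⁻¹ * c k := by
    intro k
    rcases (hs k).eq_or_lt with hzero | hpos
    · simp [hc k hzero.symm]
    · exact ⟨(integrableOn_Ioi_ofReal_exp_neg_mul hpos).mul_const _,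
        by rw [integral_mul_const, integral_Ioi_ofReal_exp_neg_mul hpos]⟩
  rw [integral_finsetSum _ fun k _ => (hterm k).1]
  exact Finset.sum_congr rfl fun k _ => (hterm k).2

/-- For `D = Σ E_{ij} ⊗ D_{ij}` positive semi-definite, `λ i ≥ 0` with `D_{ij} = 0`
whenever `λ_i + λ_j = 0`, and any vector `v = Σ_k e_k ⊗ v_k`, one has
`v† (Σ_{λ_i+λ_j≠0} E_{ij} ⊗ D_{ij}/(λ_i+λ_j)) v = ∫_0^∞ v(t)† D v(t) dt ≥ 0`,
where `v(t) = Σ_k e^{-tλ_k} e_k ⊗ v_k`. -/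
theorem stmt_11 {d n : ℕ} (lam : Fin d → ℝ) (hlam : ∀ i, 0 ≤ lam i)
    (Dblk : Fin d → Fin d → Matrix (Fin n) (Fin n) ℂ)
    (hD : (∑ i : Fin d, ∑ j : Fin d, Matrix.single i j (1 : ℂ) ⊗ₖ Dblk i j).PosSemidef)
    (hzero : ∀ i j, lam i + lam j = 0 → Dblk i j = 0)
    (v : Fin d × Fin n → ℂ) :
    let X : Matrix (Fin d × Fin n) (Fin d × Fin n) ℂ :=
      ∑ i : Fin d, ∑ j : Fin d,
        if lam i + lam j ≠ 0 then
          Matrix.single i j (1 : ℂ) ⊗ₖ (((lam i + lam j : ℂ)⁻¹) • Dblk i j)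
        else 0
    let D : Matrix (Fin d × Fin n) (Fin d × Fin n) ℂ :=
      ∑ i : Fin d, ∑ j : Fin d, Matrix.single i j (1 : ℂ) ⊗ₖ Dblk i j
    let vt : ℝ → (Fin d × Fin n → ℂ) := fun t p => (Real.exp (-t * lam p.1) : ℂ) * v p
    (star v ⬝ᵥ (X *ᵥ v) = ∫ t in Set.Ioi (0 : ℝ), star (vt t) ⬝ᵥ (D *ᵥ vt t)) ∧
      0 ≤ star v ⬝ᵥ (X *ᵥ v) := by
  intro X D vt
  set q : Fin d → Fin d → ℂ := fun i j =>
    star (Function.curry v i) ⬝ᵥ (Dblk i j *ᵥ Function.curry v j)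
  have hX : X = comp _ _ _ _ ℂ (of fun i j => ((lam i + lam j : ℂ)⁻¹) • Dblk i j) := by
    rw [← sum_single_kronecker_eq_comp]
    refine Finset.sum_congr rfl fun i _ => Finset.sum_congr rfl fun j _ => ?_
    split_ifs with h
    · rfl
    · simp [hzero i j (not_not.mp h)]
  have hXq : star v ⬝ᵥ (X *ᵥ v) = ∑ i, ∑ j, ((lam i + lam j : ℝ) : ℂ)⁻¹ * q i j := by
    rw [hX, dotProduct_comp_mulVec]
    simp only [of_apply, smul_mulVec, dotProduct_smul, smul_eq_mul, Complex.ofReal_add]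
    rfl
  have hDq : ∀ t, star (vt t) ⬝ᵥ (D *ᵥ vt t) =
      ∑ i, ∑ j, (Real.exp (-((lam i + lam j) * t)) : ℂ) * q i j := by
    intro t
    rw [show D = _ from sum_single_kronecker_eq_comp Dblk]
    refine (star_dotProduct_comp_mulVec_real_mul (of Dblk) (fun k => Real.exp (-t * lam k)) v).trans
      (Finset.sum_congr rfl fun i _ => Finset.sum_congr rfl fun j _ => ?_)
    rw [← Real.exp_add, show -t * lam i + -t * lam j = -((lam i + lam j) * t) by ring]
    rfl
  have heq : star v ⬝ᵥ (X *ᵥ v) = ∫ t in Set.Ioi (0 : ℝ), star (vt t) ⬝ᵥ (D *ᵥ vt t) := by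
    simp only [hXq, hDq, ← Fintype.sum_prod_type']
    exact (integral_Ioi_sum_ofReal_exp_neg_mul_mul _ _ (fun k => add_nonneg (hlam _) (hlam _))
      fun k hk => by simp [q, hzero _ _ hk]).symm
  exact ⟨heq, heq ▸ integral_nonneg fun t => hD.dotProduct_mulVec_nonneg _⟩
end

section
/- Let ρ_AB be a bipartite density matrix on C^d ⊗ C^n with ρ_A = Tr_B[ρ_AB]. Then there exists a completely positive trace-preserving map E from d×d to n×n matrices such that the partial transpose satisfies ρ_AB^{T_B} = (1/2){ρ_A ⊗ 1, J[E]}, where J[E] = Σ_{i,j} E_{ij} ⊗ E(E_{ji}) is the Jamiołkowski operator and {·,·} is the anticommutator. -/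
/-
Diagonalise `ρ_A = U diag(l) U*`. Conjugation by `U ⊗ 1` commutes with `T_B` and `Tr_B`, so we
may assume `ρ_A = diag(l)`; then `{ρ_A ⊗ 1, J} = 2 ρ^{T_B}` decouples entrywise into
`(l_a + l_b) J_{(a,k),(b,m)} = 2 ρ^{T_B}_{(a,k),(b,m)}`. Positivity of `ρ` makes its rows and
columns over `ker ρ_A` vanish, so `J = 2 C ∘ ρ^{T_B} + (1/n) P₀ ⊗ 1` is a solution, where
`C_{ab} = 1/(l_a + l_b)` is a Cauchy matrix and `P₀` projects onto `ker ρ_A`; the `P₀` term gives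
`Tr_B J = 1`, i.e. the map with Jamiołkowski operator `J` is trace preserving. Its Choi matrix is
`J^{T_A} = 2 C ∘ ρᵀ + (1/n) P₀ ⊗ 1`, positive by the Schur product theorem, because `C` is the Gram
matrix of the functions `t ↦ e^{-l_a t}` in `L²(0, ∞)`.
-/

open Matrix Kronecker ComplexOrder BigOperators

/-- The partial trace over the second tensor factor. -/
noncomputable def trB {d n : ℕ} (X : Matrix (Fin d × Fin n) (Fin d × Fin n) ℂ) :
    Matrix (Fin d) (Fin d) ℂ :=
  Matrix.of fun i j => ∑ k : Fin n, X (i, k) (j, k)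

/-- Partial transpose on the second tensor factor. -/
def TB {d n : ℕ} (X : Matrix (Fin d × Fin n) (Fin d × Fin n) ℂ) :
    Matrix (Fin d × Fin n) (Fin d × Fin n) ℂ :=
  Matrix.of fun p q => X (p.1, q.2) (q.1, p.2)

/-- The Choi matrix `C[E] = Σ_{i,j} E_{ij} ⊗ E(E_{ij})`. -/
noncomputable def choi {d n : ℕ}
    (E : Matrix (Fin d) (Fin d) ℂ →ₗ[ℂ] Matrix (Fin n) (Fin n) ℂ) :
    Matrix (Fin d × Fin n) (Fin d × Fin n) ℂ :=
  ∑ i : Fin d, ∑ j : Fin d, Matrix.single i j (1 : ℂ) ⊗ₖ E (Matrix.single i j (1 : ℂ))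

/-- The Jamiołkowski operator `J[E] = Σ_{i,j} E_{ij} ⊗ E(E_{ji})`. -/
noncomputable def jam {d n : ℕ}
    (E : Matrix (Fin d) (Fin d) ℂ →ₗ[ℂ] Matrix (Fin n) (Fin n) ℂ) :
    Matrix (Fin d × Fin n) (Fin d × Fin n) ℂ :=
  ∑ i : Fin d, ∑ j : Fin d, Matrix.single i j (1 : ℂ) ⊗ₖ E (Matrix.single j i (1 : ℂ))

theorem Matrix.PosSemidef.apply_eq_zero_of_diag_eq_zero {ι 𝕜 : Type*} [Fintype ι] [RCLike 𝕜]
    {A : Matrix ι ι 𝕜} (hA : A.PosSemidef) {i : ι} (hi : A i i = 0) (j : ι) : A j i = 0 := by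
  classical
  have := (hA.dotProduct_mulVec_zero_iff (Pi.single i 1)).1 (by simp [hi])
  simpa using congrFun this j

section Cauchy

open MeasureTheory Set

noncomputable def cauchyMatrix {ι : Type*} (x : ι → ℝ) : Matrix ι ι ℂ :=
  of fun i j => ((x i + x j)⁻¹ : ℝ)

theorem integral_exp_mul_exp_Ioi {a b : ℝ} (ha : 0 < a) (hb : 0 < b) :
    ∫ t in Ioi (0 : ℝ), Real.exp (-(a * t)) * Real.exp (-(b * t)) = (a + b)⁻¹ := by
  have hab : -(a + b) < 0 := by linarith
  simp_rw [← Real.exp_add, show ∀ t, -(a * t) + -(b * t) = -(a + b) * t from fun t => by ring]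
  rw [integral_exp_mul_Ioi hab, mul_zero, Real.exp_zero, neg_div_neg_eq, one_div]

theorem integrableOn_exp_mul_exp_Ioi {a b : ℝ} (ha : 0 < a) (hb : 0 < b) :
    IntegrableOn (fun t => Real.exp (-(a * t)) * Real.exp (-(b * t))) (Ioi 0) := by
  have hab : -(a + b) < 0 := by linarith
  simp_rw [← Real.exp_add, show ∀ t, -(a * t) + -(b * t) = -(a + b) * t from fun t => by ring]
  exact integrableOn_exp_mul_Ioi hab 0

theorem posSemidef_cauchyMatrix {ι : Type*} [Fintype ι] {x : ι → ℝ} (hx : ∀ i, 0 < x i) :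
    (cauchyMatrix x).PosSemidef := by
  rw [posSemidef_iff_dotProduct_mulVec]
  refine ⟨?_, fun v => ?_⟩
  · ext i j; simp [cauchyMatrix, add_comm]
  set f : ι → ℝ → ℂ := fun i t => v i * (Real.exp (-(x i * t)) : ℂ)
  have hf : ∀ i j t, star (f i t) * f j t =
      star (v i) * v j * ((Real.exp (-(x i * t)) * Real.exp (-(x j * t)) : ℝ) : ℂ) := by
    intro i j t
    simp only [f, star_mul', Complex.star_def, Complex.conj_ofReal, Complex.ofReal_mul]
    ring
  have hint : ∀ i j, IntegrableOn (fun t => star (f i t) * f j t) (Ioi 0) := fun i j => by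
    simp_rw [hf]
    exact ((integrableOn_exp_mul_exp_Ioi (hx i) (hx j)).ofReal).const_mul _
  have hentry : ∀ i j, star (v i) * (cauchyMatrix x i j * v j) =
      ∫ t in Ioi 0, star (f i t) * f j t := fun i j => by
    simp_rw [hf, integral_const_mul, integral_complex_ofReal,
      integral_exp_mul_exp_Ioi (hx i) (hx j), cauchyMatrix, of_apply]
    ring
  have hquad : star v ⬝ᵥ cauchyMatrix x *ᵥ v = ∫ t in Ioi 0, ((‖∑ i, f i t‖ ^ 2 : ℝ) : ℂ) := by
    calc star v ⬝ᵥ cauchyMatrix x *ᵥ v = ∑ i, ∑ j, ∫ t in Ioi 0, star (f i t) * f j t := by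
          simp only [dotProduct, mulVec, Pi.star_apply, Finset.mul_sum, hentry]
      _ = ∫ t in Ioi 0, ∑ i, ∑ j, star (f i t) * f j t := by
          rw [integral_finsetSum _ fun i _ => integrable_finsetSum _ fun j _ => hint i j]
          exact Finset.sum_congr rfl fun i _ => (integral_finsetSum _ fun j _ => hint i j).symm
      _ = ∫ t in Ioi 0, ((‖∑ i, f i t‖ ^ 2 : ℝ) : ℂ) := by
          simp_rw [← Finset.sum_mul_sum, ← star_sum, Complex.star_def, Complex.conj_mul',
            Complex.ofReal_pow]
  rw [hquad, integral_complex_ofReal]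
  exact_mod_cast integral_nonneg fun t => sq_nonneg _

end Cauchy

def TA {d n : ℕ} (X : Matrix (Fin d × Fin n) (Fin d × Fin n) ℂ) :
    Matrix (Fin d × Fin n) (Fin d × Fin n) ℂ :=
  Matrix.of fun p q => X (q.1, p.2) (p.1, q.2)

section PartialTranspose

variable {d n : ℕ}

theorem kronecker_one_mul_mul_kronecker_one_apply (M N : Matrix (Fin d) (Fin d) ℂ)
    (X : Matrix (Fin d × Fin n) (Fin d × Fin n) ℂ) (p q : Fin d × Fin n) :
    ((M ⊗ₖ (1 : Matrix (Fin n) (Fin n) ℂ)) * X * (N ⊗ₖ (1 : Matrix (Fin n) (Fin n) ℂ))) p q =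
      ∑ a, ∑ b, M p.1 a * X (a, p.2) (b, q.2) * N b q.1 := by
  simp only [mul_apply, Fintype.sum_prod_type, kroneckerMap_apply, one_apply, Finset.sum_mul,
    mul_ite, mul_one, mul_zero, ite_mul, zero_mul, Finset.sum_ite_eq, Finset.sum_ite_eq',
    Finset.mem_univ, if_true]
  rw [Finset.sum_comm]

theorem trB_kronecker_one_mul_mul_kronecker_one (M N : Matrix (Fin d) (Fin d) ℂ)
    (X : Matrix (Fin d × Fin n) (Fin d × Fin n) ℂ) :
    trB ((M ⊗ₖ (1 : Matrix (Fin n) (Fin n) ℂ)) * X * (N ⊗ₖ (1 : Matrix (Fin n) (Fin n) ℂ))) =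
      M * trB X * N := by
  ext i j
  simp only [trB, of_apply, kronecker_one_mul_mul_kronecker_one_apply]
  simp only [mul_apply, of_apply, Finset.sum_mul, Finset.mul_sum]
  rw [Finset.sum_comm]
  conv_rhs => rw [Finset.sum_comm]
  exact Finset.sum_congr rfl fun a _ => Finset.sum_comm

theorem TB_kronecker_one_mul_mul_kronecker_one (M N : Matrix (Fin d) (Fin d) ℂ)
    (X : Matrix (Fin d × Fin n) (Fin d × Fin n) ℂ) :
    TB ((M ⊗ₖ (1 : Matrix (Fin n) (Fin n) ℂ)) * X * (N ⊗ₖ (1 : Matrix (Fin n) (Fin n) ℂ))) =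
      (M ⊗ₖ (1 : Matrix (Fin n) (Fin n) ℂ)) * TB X * (N ⊗ₖ (1 : Matrix (Fin n) (Fin n) ℂ)) := by
  ext p q
  rw [TB, of_apply, kronecker_one_mul_mul_kronecker_one_apply,
    kronecker_one_mul_mul_kronecker_one_apply]
  rfl

theorem TA_kronecker_one_mul_mul_kronecker_one (M N : Matrix (Fin d) (Fin d) ℂ)
    (X : Matrix (Fin d × Fin n) (Fin d × Fin n) ℂ) :
    TA ((M ⊗ₖ (1 : Matrix (Fin n) (Fin n) ℂ)) * X * (N ⊗ₖ (1 : Matrix (Fin n) (Fin n) ℂ))) =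
      (Nᵀ ⊗ₖ (1 : Matrix (Fin n) (Fin n) ℂ)) * TA X * (Mᵀ ⊗ₖ (1 : Matrix (Fin n) (Fin n) ℂ)) := by
  ext p q
  rw [TA, of_apply, kronecker_one_mul_mul_kronecker_one_apply,
    kronecker_one_mul_mul_kronecker_one_apply, Finset.sum_comm]
  exact Finset.sum_congr rfl fun b _ => Finset.sum_congr rfl fun a _ => by
    simp only [TA, transpose_apply, of_apply]; ring

theorem Matrix.PosSemidef.trB {X : Matrix (Fin d × Fin n) (Fin d × Fin n) ℂ}
    (hX : X.PosSemidef) : (_root_.trB X).PosSemidef := by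
  have : _root_.trB X = ∑ k, X.submatrix (·, k) (·, k) := by ext; simp [_root_.trB, sum_apply]
  rw [this]
  exact posSemidef_sum _ fun k _ => hX.submatrix _

theorem jam_apply (E : Matrix (Fin d) (Fin d) ℂ →ₗ[ℂ] Matrix (Fin n) (Fin n) ℂ)
    (p q : Fin d × Fin n) : jam E p q = E (single q.1 p.1 1) p.2 q.2 := by
  simp [jam, Matrix.sum_apply, single_apply, ite_and]

theorem choi_eq_TA_jam (E : Matrix (Fin d) (Fin d) ℂ →ₗ[ℂ] Matrix (Fin n) (Fin n) ℂ) :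
    choi E = TA (jam E) := by
  ext p q
  simp [choi, TA, jam_apply, Matrix.sum_apply, single_apply, ite_and]

noncomputable def ofJam (J : Matrix (Fin d × Fin n) (Fin d × Fin n) ℂ) :
    Matrix (Fin d) (Fin d) ℂ →ₗ[ℂ] Matrix (Fin n) (Fin n) ℂ where
  toFun X := of fun k m => ∑ i, ∑ j, X j i * J (i, k) (j, m)
  map_add' X Y := by ext; simp only [of_apply, Matrix.add_apply, add_mul, Finset.sum_add_distrib]
  map_smul' c X := by
    ext; simp only [of_apply, Matrix.smul_apply, smul_eq_mul, mul_assoc, Finset.mul_sum,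
      RingHom.id_apply]

theorem ofJam_apply (J : Matrix (Fin d × Fin n) (Fin d × Fin n) ℂ) (X : Matrix (Fin d) (Fin d) ℂ)
    (k m : Fin n) : ofJam J X k m = ∑ i, ∑ j, X j i * J (i, k) (j, m) := rfl

theorem jam_ofJam (J : Matrix (Fin d × Fin n) (Fin d × Fin n) ℂ) : jam (ofJam J) = J := by
  ext p q
  simp [jam_apply, ofJam_apply, single_apply, ite_and]

theorem trace_ofJam (J : Matrix (Fin d × Fin n) (Fin d × Fin n) ℂ) (X : Matrix (Fin d) (Fin d) ℂ) :
    (ofJam J X).trace = (trB J * X).trace := by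
  simp only [trace, diag_apply, ofJam_apply, mul_apply, trB, of_apply, Finset.sum_mul]
  rw [Finset.sum_comm]
  refine Finset.sum_congr rfl fun i _ => ?_
  rw [Finset.sum_comm]
  simp only [mul_comm]

structure IsPartialTransposeJam {d n : ℕ} (ρ J : Matrix (Fin d × Fin n) (Fin d × Fin n) ℂ) :
    Prop where
  TA_posSemidef : (TA J).PosSemidef
  trB_eq_one : trB J = 1
  TB_eq : TB ρ = (1 / 2 : ℂ) • ((trB ρ ⊗ₖ (1 : Matrix (Fin n) (Fin n) ℂ)) * J +
    J * (trB ρ ⊗ₖ (1 : Matrix (Fin n) (Fin n) ℂ)))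

theorem Matrix.PosSemidef.apply_eq_zero_of_trB_apply_self_eq_zero
    {ρ : Matrix (Fin d × Fin n) (Fin d × Fin n) ℂ} (hρ : ρ.PosSemidef) {a : Fin d}
    (ha : _root_.trB ρ a a = 0) (k : Fin n) (q : Fin d × Fin n) :
    ρ q (a, k) = 0 ∧ ρ (a, k) q = 0 := by
  have hdiag : ρ (a, k) (a, k) = 0 :=
    (Finset.sum_eq_zero_iff_of_nonneg fun k _ => hρ.diag_nonneg (i := (a, k))).1
      (show ∑ k, ρ (a, k) (a, k) = 0 from ha) k (Finset.mem_univ k)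
  have hcol := hρ.apply_eq_zero_of_diag_eq_zero hdiag q
  exact ⟨hcol, by rw [← hρ.1.apply, hcol, star_zero]⟩

section Diagonal

variable {ρ : Matrix (Fin d × Fin n) (Fin d × Fin n) ℂ} {l : Fin d → ℝ}

/- Replacing the zero eigenvalues by `1` keeps the Cauchy matrix positive; the entries this changes
only multiply entries of `TB ρ` that vanish. -/
noncomputable def jamOfDiagonal (n : ℕ) (l : Fin d → ℝ)
    (ρ : Matrix (Fin d × Fin n) (Fin d × Fin n) ℂ) : Matrix (Fin d × Fin n) (Fin d × Fin n) ℂ :=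
  (2 : ℂ) • ((cauchyMatrix fun a => if l a = 0 then 1 else l a).submatrix Prod.fst Prod.fst ⊙
    TB ρ) + diagonal fun p => if l p.1 = 0 then (n : ℂ)⁻¹ else 0

theorem trB_jamOfDiagonal (hdiag : trB ρ = diagonal fun a => (l a : ℂ)) (hn : n ≠ 0) :
    trB (jamOfDiagonal n l ρ) = 1 := by
  ext a b
  have hρab : ∑ k, ρ (a, k) (b, k) = if a = b then (l a : ℂ) else 0 := by
    simpa [trB, diagonal_apply] using congrFun (congrFun hdiag a) b
  simp only [jamOfDiagonal, trB, of_apply, Matrix.add_apply, Matrix.smul_apply, hadamard_apply,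
    submatrix_apply, TB, diagonal_apply, Prod.mk.injEq, and_true, Finset.sum_add_distrib,
    ← Finset.mul_sum, smul_eq_mul, hρab]
  rcases eq_or_ne a b with rfl | hab
  · by_cases ha : l a = 0
    · simp [ha, hn]
    · have : (l a : ℂ) ≠ 0 := by exact_mod_cast ha
      simp only [cauchyMatrix, Complex.ofReal_inv, Complex.ofReal_add, of_apply, ha, ↓reduceIte,
        Finset.sum_const_zero, add_zero, one_apply_eq]
      field_simp
      ring
  · simp [hab]

theorem posSemidef_TA_jamOfDiagonal (hρ : ρ.PosSemidef) (hl : 0 ≤ l) :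
    (TA (jamOfDiagonal n l ρ)).PosSemidef := by
  have hC : (cauchyMatrix fun a => if l a = 0 then 1 else l a).PosSemidef :=
    posSemidef_cauchyMatrix fun a => by
      split_ifs with ha
      · exact one_pos
      · exact (hl a).lt_of_ne' ha
  have : TA (jamOfDiagonal n l ρ) =
      (2 : ℂ) • ((cauchyMatrix fun a => if l a = 0 then 1 else l a).submatrix Prod.fst Prod.fst ⊙
        ρᵀ) + diagonal fun p => if l p.1 = 0 then (n : ℂ)⁻¹ else 0 := by
    ext p q
    simp only [jamOfDiagonal, TA, TB, cauchyMatrix, of_apply, Matrix.add_apply, Matrix.smul_apply,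
      hadamard_apply, submatrix_apply, transpose_apply, diagonal_apply, Prod.ext_iff, add_comm]
    grind
  rw [this]
  refine ((hC.submatrix _).hadamard hρ.transpose).smul (by norm_num) |>.add ?_
  exact PosSemidef.diagonal fun p => by dsimp only; split_ifs <;> simp

theorem TB_eq_half_anticommutator_jamOfDiagonal (hρ : ρ.PosSemidef) (hl : 0 ≤ l)
    (hdiag : trB ρ = diagonal fun a => (l a : ℂ)) :
    TB ρ = (1 / 2 : ℂ) • ((trB ρ ⊗ₖ (1 : Matrix (Fin n) (Fin n) ℂ)) * jamOfDiagonal n l ρ +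
      jamOfDiagonal n l ρ * (trB ρ ⊗ₖ (1 : Matrix (Fin n) (Fin n) ℂ))) := by
  have hD : trB ρ ⊗ₖ (1 : Matrix (Fin n) (Fin n) ℂ) = diagonal fun p => (l p.1 : ℂ) := by
    rw [hdiag, ← diagonal_one, diagonal_kronecker_diagonal]
    simp
  have hker : ∀ p q : Fin d × Fin n, l p.1 = 0 ∨ l q.1 = 0 → TB ρ p q = 0 := by
    have hzero : ∀ {a}, l a = 0 → trB ρ a a = 0 := fun ha => by simp [hdiag, ha]
    rintro p q (hp | hq)
    · exact (hρ.apply_eq_zero_of_trB_apply_self_eq_zero (hzero hp) q.2 _).2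
    · exact (hρ.apply_eq_zero_of_trB_apply_self_eq_zero (hzero hq) p.2 _).1
  ext p q
  rw [hD, Matrix.smul_apply, Matrix.add_apply, diagonal_mul, mul_diagonal]
  simp only [jamOfDiagonal, Matrix.add_apply, Matrix.smul_apply, hadamard_apply, submatrix_apply,
    diagonal_apply, cauchyMatrix, of_apply, smul_eq_mul]
  by_cases h : l p.1 = 0 ∨ l q.1 = 0
  · rw [hker p q h]
    rcases eq_or_ne p q with rfl | hpq
    · rcases h with h | h <;> simp [h]
    · simp [hpq]
  · push Not at h
    have hpos : 0 < l p.1 + l q.1 := add_pos ((hl _).lt_of_ne' h.1) ((hl _).lt_of_ne' h.2)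
    have : (l p.1 : ℂ) + l q.1 ≠ 0 := by exact_mod_cast hpos.ne'
    simp only [h.1, h.2, if_false, ite_self, add_zero, Complex.ofReal_inv, Complex.ofReal_add]
    field_simp

end Diagonal

theorem isPartialTransposeJam_jamOfDiagonal {ρ : Matrix (Fin d × Fin n) (Fin d × Fin n) ℂ}
    {l : Fin d → ℝ} (hρ : ρ.PosSemidef) (hl : 0 ≤ l) (hdiag : trB ρ = diagonal fun a => (l a : ℂ))
    (hn : n ≠ 0) : IsPartialTransposeJam ρ (jamOfDiagonal n l ρ) :=
  ⟨posSemidef_TA_jamOfDiagonal hρ hl, trB_jamOfDiagonal hdiag hn,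
    TB_eq_half_anticommutator_jamOfDiagonal hρ hl hdiag⟩

theorem IsPartialTransposeJam.conj {ρ J : Matrix (Fin d × Fin n) (Fin d × Fin n) ℂ}
    (h : IsPartialTransposeJam ρ J) {U : Matrix (Fin d) (Fin d) ℂ} (hU : U ∈ unitary _) :
    IsPartialTransposeJam
      ((U ⊗ₖ (1 : Matrix (Fin n) (Fin n) ℂ)) * ρ * (star U ⊗ₖ (1 : Matrix (Fin n) (Fin n) ℂ)))
      ((U ⊗ₖ (1 : Matrix (Fin n) (Fin n) ℂ)) * J *
        (star U ⊗ₖ (1 : Matrix (Fin n) (Fin n) ℂ))) where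
  TA_posSemidef := by
    rw [TA_kronecker_one_mul_mul_kronecker_one]
    convert h.TA_posSemidef.conjTranspose_mul_mul_same (Uᵀ ⊗ₖ (1 : Matrix (Fin n) (Fin n) ℂ))
    rw [conjTranspose_kronecker, conjTranspose_one]
    rfl
  trB_eq_one := by
    rw [trB_kronecker_one_mul_mul_kronecker_one, h.trB_eq_one, mul_one,
      Unitary.mul_star_self_of_mem hU]
  TB_eq := by
    let φ := Unitary.conjStarAlgAut ℂ _
      (⟨U ⊗ₖ 1, kronecker_mem_unitary hU (one_mem _)⟩ :
        unitary (Matrix (Fin d × Fin n) (Fin d × Fin n) ℂ))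
    have hφ : ∀ X, φ X =
        (U ⊗ₖ (1 : Matrix (Fin n) (Fin n) ℂ)) * X * (star U ⊗ₖ (1 : Matrix (Fin n) (Fin n) ℂ)) := by
      intro X
      simp [φ, star_eq_conjTranspose, conjTranspose_kronecker]
    have hA : (U * trB ρ * star U) ⊗ₖ (1 : Matrix (Fin n) (Fin n) ℂ) =
        φ (trB ρ ⊗ₖ (1 : Matrix (Fin n) (Fin n) ℂ)) := by
      rw [hφ, ← mul_kronecker_mul, ← mul_kronecker_mul, mul_one, mul_one]
    rw [TB_kronecker_one_mul_mul_kronecker_one, trB_kronecker_one_mul_mul_kronecker_one, hA,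
      h.TB_eq]
    simp only [← hφ, map_smul, map_add, map_mul]

theorem exists_isPartialTransposeJam {ρ : Matrix (Fin d × Fin n) (Fin d × Fin n) ℂ}
    (hρ : ρ.PosSemidef) (hn : n ≠ 0) : ∃ J, IsPartialTransposeJam ρ J := by
  obtain ⟨U, hU, l, hl, hspec⟩ : ∃ U ∈ unitary (Matrix (Fin d) (Fin d) ℂ), ∃ l : Fin d → ℝ,
      0 ≤ l ∧ trB ρ = U * diagonal (fun a => (l a : ℂ)) * star U :=
    have hA := hρ.trB
    ⟨_, hA.1.eigenvectorUnitary.2, _, hA.eigenvalues_nonneg,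
      by simpa [Function.comp_def] using hA.1.spectral_theorem⟩
  have hUU : (U ⊗ₖ (1 : Matrix (Fin n) (Fin n) ℂ)) * (star U ⊗ₖ (1 : Matrix (Fin n) (Fin n) ℂ)) =
      1 := by
    rw [← mul_kronecker_mul, Unitary.mul_star_self_of_mem hU, mul_one, one_kronecker_one]
  set ρ' := (star U ⊗ₖ (1 : Matrix (Fin n) (Fin n) ℂ)) * ρ * (U ⊗ₖ (1 : Matrix (Fin n) (Fin n) ℂ))
  have hρ' : ρ'.PosSemidef := by
    convert hρ.conjTranspose_mul_mul_same (U ⊗ₖ (1 : Matrix (Fin n) (Fin n) ℂ))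
    rw [conjTranspose_kronecker, conjTranspose_one, star_eq_conjTranspose]
  have hdiag : trB ρ' = diagonal (fun a => (l a : ℂ)) := by
    rw [trB_kronecker_one_mul_mul_kronecker_one, hspec, ← mul_assoc, ← mul_assoc,
      Unitary.star_mul_self_of_mem hU, one_mul, mul_assoc, Unitary.star_mul_self_of_mem hU, mul_one]
  have hρρ' : (U ⊗ₖ (1 : Matrix (Fin n) (Fin n) ℂ)) * ρ' *
      (star U ⊗ₖ (1 : Matrix (Fin n) (Fin n) ℂ)) = ρ := by
    rw [← mul_assoc, ← mul_assoc, hUU, one_mul, mul_assoc, hUU, mul_one]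
  exact ⟨_, hρρ' ▸ (isPartialTransposeJam_jamOfDiagonal hρ' hl hdiag hn).conj hU⟩

end PartialTranspose

/-- The Partial Transpose Theorem (existence part): for a bipartite density matrix
`ρ_AB`, there exists a CPTP map `E` with
`ρ_AB^{T_B} = (1/2){ρ_A ⊗ 1, J[E]}` where `ρ_A = Tr_B[ρ_AB]`. -/
theorem stmt_16 {d n : ℕ} (ρAB : Matrix (Fin d × Fin n) (Fin d × Fin n) ℂ)
    (hρ : ρAB.PosSemidef) (htr : ρAB.trace = 1) :
    ∃ E : Matrix (Fin d) (Fin d) ℂ →ₗ[ℂ] Matrix (Fin n) (Fin n) ℂ,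
      (choi E).PosSemidef ∧
      (∀ X : Matrix (Fin d) (Fin d) ℂ, (E X).trace = X.trace) ∧
      TB ρAB = (1 / 2 : ℂ) •
        ((trB ρAB ⊗ₖ (1 : Matrix (Fin n) (Fin n) ℂ)) * jam E +
          jam E * (trB ρAB ⊗ₖ (1 : Matrix (Fin n) (Fin n) ℂ))) := by
  have hn : n ≠ 0 := by
    rintro rfl
    simp [trace] at htr
  obtain ⟨J, hJ⟩ := exists_isPartialTransposeJam hρ hn
  refine ⟨ofJam J, ?_, fun X => ?_, ?_⟩
  · rw [choi_eq_TA_jam, jam_ofJam]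
    exact hJ.TA_posSemidef
  · rw [trace_ofJam, hJ.trB_eq_one, one_mul]
  · rw [jam_ofJam]
    exact hJ.TB_eq
end
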